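/- arXiv:2210.17371 — 2 statements merged into one kernel-verified Lean document; each statement's English description precedes it below -/
import Mathlib

section
/- Let T, the constants, and a gadget system satisfying (G1)–(G9) be as in the context. Let D₁ ⊆ A₁, let θ₁ ≤ φ₂ and set θ₂ := θ₁/(2^8 ρ). For each α ∈ D₁, s ∈ S(α) and ν ∈ {+,−}, let M^ν(s) be a vertex set of size at least θ₁kt, and suppose each u ∈ M^ν(s) is associated with a subset M_α(u) ⊆ V_okay of size at least θ₁kt. Then there is a subset D₂ ⊆ D₁ of size at least |D₁|/(36ρ²) such that for every α ∈ D₂, every s ∈ S(α) and every ν ∈ {+,−}, there are at least θ₂kt vertices u ∈ M^ν(s) such that M_α(u) contains at least θ₂kt vertices v with |N⁻_good(v) ∩ W(D₂ ∖ {α})| ≥ θ₂kt. -/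
open Finset

namespace TournamentPartition

/-! ### Basic constants from the paper -/

def rho : ℕ := 10 ^ 4
def sigma1 : ℕ := 10 ^ 60
def sigma2 : ℕ := 10 ^ 4
def sigma3 : ℕ := 10

/-- `s` contains at least `m` elements satisfying `P`. -/
def ManyIn {α : Type*} (s : Finset α) (m : ℝ) (P : α → Prop) : Prop :=
  ∃ s' : Finset α, s' ⊆ s ∧ m ≤ (s'.card : ℝ) ∧ ∀ x ∈ s', P x

section Defs

variable {V I : Type*}

/-- `E u v` means that the edge between `u` and `v` is directed from `u` to `v`. -/
def IsTournament (E : V → V → Prop) : Prop :=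
  (∀ v, ¬ E v v) ∧ ∀ u v : V, u ≠ v → (E u v ↔ ¬ E v u)

/-- There is a directed path from `u` to `v` all of whose vertices lie in `S`. -/
def ReachWithin (E : V → V → Prop) (S : Set V) (u v : V) : Prop :=
  Relation.ReflTransGen (fun a b => a ∈ S ∧ b ∈ S ∧ E a b) u v

def StronglyConnectedOn (E : V → V → Prop) (S : Set V) : Prop :=
  ∀ u ∈ S, ∀ v ∈ S, ReachWithin E S u v

/-- A directed path, as a list of distinct vertices with consecutive edges. -/
def IsDiPath (E : V → V → Prop) (l : List V) : Prop :=
  l ≠ [] ∧ l.Nodup ∧ l.Chain' E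

variable [Fintype V] [DecidableEq V]

/-- The set `S` induces a strongly `k`-connected subtournament. -/
def StronglyKConnectedOn (E : V → V → Prop) (k : ℕ) (S : Finset V) : Prop :=
  k + 1 ≤ S.card ∧
    ∀ Z : Finset V, Z.card ≤ k → StronglyConnectedOn E ((S \ Z : Finset V) : Set V)

def StronglyKConnected (E : V → V → Prop) (k : ℕ) : Prop :=
  StronglyKConnectedOn E k Finset.univ

def outN (E : V → V → Prop) [DecidableRel E] (u : V) : Finset V :=
  Finset.univ.filter fun v => E u v

def inN (E : V → V → Prop) [DecidableRel E] (u : V) : Finset V :=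
  Finset.univ.filter fun v => E v u

/-- A system of gadgets `U(α)` with special sets `S⁺(α), S⁻(α) ⊆ S(α) ⊆ U(α)`,
exceptional sets `X(α)` and special vertices `s⁺(α), s⁻(α) ∈ S(α)`. -/
structure GadgetSystem (V I : Type*) where
  U : I → Finset V
  S : I → Finset V
  Sp : I → Finset V
  Sm : I → Finset V
  X : I → Finset V
  sp : I → V
  sm : I → V
  sp_mem : ∀ α, sp α ∈ S α
  sm_mem : ∀ α, sm α ∈ S α
  Sp_subset : ∀ α, Sp α ⊆ S α
  Sm_subset : ∀ α, Sm α ⊆ S α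
  S_subset : ∀ α, S α ⊆ U α

variable [Fintype I] [DecidableEq I]

def Vokay (G : GadgetSystem V I) : Finset V :=
  Finset.univ \ Finset.univ.biUnion G.S

/-- Vertices of `V_okay` having no out-neighbour in `S⁻(α)` for at least `k*t` indices `α`. -/
def VbadP (E : V → V → Prop) [DecidableRel E] (G : GadgetSystem V I) (k t : ℕ) : Finset V :=
  (Vokay G).filter fun u =>
    k * t ≤ (Finset.univ.filter fun α : I => ∀ v ∈ G.Sm α, ¬ E u v).card

/-- Vertices of `V_okay` having no in-neighbour in `S⁺(α)` for at least `k*t` indices `α`. -/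
def VbadM (E : V → V → Prop) [DecidableRel E] (G : GadgetSystem V I) (k t : ℕ) : Finset V :=
  (Vokay G).filter fun u =>
    k * t ≤ (Finset.univ.filter fun α : I => ∀ v ∈ G.Sp α, ¬ E v u).card

def Vbad (E : V → V → Prop) [DecidableRel E] (G : GadgetSystem V I) (k t : ℕ) : Finset V :=
  VbadP E G k t ∩ VbadM E G k t

def VgoodP (E : V → V → Prop) [DecidableRel E] (G : GadgetSystem V I) (k t : ℕ) : Finset V :=
  Vokay G \ VbadP E G k t

def VgoodM (E : V → V → Prop) [DecidableRel E] (G : GadgetSystem V I) (k t : ℕ) : Finset V :=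
  Vokay G \ VbadM E G k t

def Vgood (E : V → V → Prop) [DecidableRel E] (G : GadgetSystem V I) (k t : ℕ) : Finset V :=
  VgoodP E G k t ∩ VgoodM E G k t

/-- `W(C) = V ∖ ⋃_{α ∈ C} U(α)`. -/
def Wof (G : GadgetSystem V I) (C : Finset I) : Finset V :=
  Finset.univ \ C.biUnion G.U

def NokayP (E : V → V → Prop) [DecidableRel E] (G : GadgetSystem V I) (u : V) : Finset V :=
  outN E u ∩ Vokay G

def NokayM (E : V → V → Prop) [DecidableRel E] (G : GadgetSystem V I) (u : V) : Finset V :=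
  inN E u ∩ Vokay G

def NgoodP (E : V → V → Prop) [DecidableRel E] (G : GadgetSystem V I) (k t : ℕ) (u : V) :
    Finset V :=
  outN E u ∩ VgoodP E G k t

def NgoodM (E : V → V → Prop) [DecidableRel E] (G : GadgetSystem V I) (k t : ℕ) (u : V) :
    Finset V :=
  inN E u ∩ Vgood E G k t

/-! ### Properties (G1)–(G9) -/

def CondG1 (G : GadgetSystem V I) : Prop :=
  ∀ α β : I, α ≠ β → Disjoint (G.U α) (G.U β)

def CondG2 (G : GadgetSystem V I) (k t : ℕ) : Prop :=
  ∀ α : I, (G.S α).card ≤ rho ∧ (G.X α).card ≤ rho * sigma1 * k * t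

def CondG3 (E : V → V → Prop) (G : GadgetSystem V I) : Prop :=
  ∀ α : I, ∀ u ∈ G.Sm α, ∀ v ∈ G.Sp α, ReachWithin E (G.U α : Set V) u v

def CondG4 (E : V → V → Prop) (G : GadgetSystem V I) : Prop :=
  ∀ α : I, ∀ x : V, x ∉ G.X α →
    (E x (G.sp α) → ∀ u ∈ G.U α \ G.S α, E x u) ∧
    (E (G.sm α) x → ∀ u ∈ G.U α \ G.S α, E u x)

def CondG5 (E : V → V → Prop) [DecidableRel E] (G : GadgetSystem V I) (k t : ℕ) : Prop :=
  ∀ u ∈ Vokay G,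
    10 ^ 12 * (VbadP E G k t).card ≤ (outN E u).card ∧
    10 ^ 12 * (VbadM E G k t).card ≤ (inN E u).card

/-- Properties (G1)–(G5) of a gadget system. -/
def GadgetHyp (E : V → V → Prop) [DecidableRel E] (G : GadgetSystem V I) (k t : ℕ) : Prop :=
  CondG1 G ∧ CondG2 G k t ∧ CondG3 E G ∧ CondG4 E G ∧ CondG5 E G k t

def CondG6 (E : V → V → Prop) [DecidableRel E] (G : GadgetSystem V I) (k t : ℕ) : Prop :=
  (Fintype.card V : ℝ) / 2 ≤ ((Vgood E G k t).card : ℝ)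

def CondG7 (E : V → V → Prop) [DecidableRel E] (G : GadgetSystem V I) (k t τ₁ : ℕ) : Prop :=
  ∀ u ∈ Vokay G,
    max ((10 : ℝ) ^ 11 * ((VbadP E G k t).card : ℝ)) (((τ₁ * k * t : ℕ) : ℝ) / 2)
      ≤ ((outN E u ∩ VgoodP E G k t).card : ℝ)

def CondG8 (E : V → V → Prop) [DecidableRel E] (G : GadgetSystem V I) (k t τ₁ : ℕ) : Prop :=
  ∀ u ∈ Vokay G,
    max ((10 : ℝ) ^ 11 * ((VbadM E G k t).card : ℝ)) (((τ₁ * k * t : ℕ) : ℝ) / 2)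
      ≤ ((inN E u ∩ Vgood E G k t).card : ℝ)

def CondG9 (E : V → V → Prop) [DecidableRel E] (G : GadgetSystem V I) (k t τ₁ : ℕ) : Prop :=
  ∀ u : V,
    max ((10 : ℝ) ^ 11 * (((Finset.univ \ Vokay G).card : ℕ) : ℝ)) (((τ₁ * k * t : ℕ) : ℝ) / 2)
      ≤ ((outN E u ∩ Vokay G).card : ℝ) ∧
    max ((10 : ℝ) ^ 11 * (((Finset.univ \ Vokay G).card : ℕ) : ℝ)) (((τ₁ * k * t : ℕ) : ℝ) / 2)
      ≤ ((inN E u ∩ Vokay G).card : ℝ)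

/-- Properties (G6)–(G9) of a gadget system. -/
def GadgetHyp2 (E : V → V → Prop) [DecidableRel E] (G : GadgetSystem V I) (k t τ₁ : ℕ) :
    Prop :=
  CondG6 E G k t ∧ CondG7 E G k t τ₁ ∧ CondG8 E G k t τ₁ ∧ CondG9 E G k t τ₁

/-! ### Available vertices -/

def AvailA1 (E : V → V → Prop) [DecidableRel E] (G : GadgetSystem V I) (k t : ℕ)
    (W : Finset V) (u : V) : Prop :=
  u ∈ Vgood E G k t ∩ W

def AvailA2 (E : V → V → Prop) [DecidableRel E] (G : GadgetSystem V I) (k t τ₂ : ℕ)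
    (W : Finset V) (u : V) : Prop :=
  u ∈ (VgoodP E G k t \ VgoodM E G k t) ∩ W ∧
    ManyIn (inN E u) ((τ₂ * k * t : ℕ) : ℝ) (AvailA1 E G k t W)

def AvailA3 (E : V → V → Prop) [DecidableRel E] (G : GadgetSystem V I) (k t τ₂ : ℕ)
    (W : Finset V) (u : V) : Prop :=
  u ∈ (VgoodM E G k t \ VgoodP E G k t) ∩ W ∧
    ManyIn (outN E u) ((τ₂ * k * t : ℕ) : ℝ)
      (fun v => AvailA1 E G k t W v ∨ AvailA2 E G k t τ₂ W v)

def AvailA4 (E : V → V → Prop) [DecidableRel E] (G : GadgetSystem V I) (k t τ₂ : ℕ)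
    (W : Finset V) (u : V) : Prop :=
  u ∈ Vbad E G k t ∩ W ∧
    ManyIn (outN E u) ((τ₂ * k * t : ℕ) : ℝ)
      (fun v => AvailA1 E G k t W v ∨ AvailA2 E G k t τ₂ W v) ∧
    ManyIn (inN E u) ((τ₂ * k * t : ℕ) : ℝ) (AvailA1 E G k t W)

/-- `u` is available (for `α`) with respect to a family `𝒜`, where `W = W(𝒜 ∖ {α})`. -/
def Available (E : V → V → Prop) [DecidableRel E] (G : GadgetSystem V I) (k t τ₂ : ℕ)
    (W : Finset V) (u : V) : Prop :=
  AvailA1 E G k t W u ∨ AvailA2 E G k t τ₂ W u ∨ AvailA3 E G k t τ₂ W u ∨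
    AvailA4 E G k t τ₂ W u

/-! ### Eligible and helpful vertices -/

/-- Indices `α ∈ 𝒜` such that `u` has no out-neighbour in `S⁻(α)`. -/
def MissOut (E : V → V → Prop) [DecidableRel E] (G : GadgetSystem V I) (𝒜 : Finset I)
    (u : V) : Finset I :=
  𝒜.filter fun α => ∀ v ∈ G.Sm α, ¬ E u v

/-- Indices `α ∈ 𝒜` such that `u` has no in-neighbour in `S⁺(α)`. -/
def MissIn (E : V → V → Prop) [DecidableRel E] (G : GadgetSystem V I) (𝒜 : Finset I)
    (u : V) : Finset I :=
  𝒜.filter fun α => ∀ v ∈ G.Sp α, ¬ E v u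

def Nice1 (E : V → V → Prop) [DecidableRel E] (G : GadgetSystem V I) (k t : ℕ)
    (𝒜 : Finset I) (W : Finset V) (u : V) : Prop :=
  u ∈ Vgood E G k t ∩ W ∧ (MissOut E G 𝒜 u).card ≤ k ∧ (MissIn E G 𝒜 u).card ≤ k

def Nice2 (E : V → V → Prop) [DecidableRel E] (G : GadgetSystem V I) (k t : ℕ) (m : ℝ)
    (𝒜 : Finset I) (W : Finset V) (u : V) : Prop :=
  u ∈ (VgoodP E G k t \ VgoodM E G k t) ∩ W ∧ (MissOut E G 𝒜 u).card ≤ k ∧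
    ManyIn (inN E u) m (Nice1 E G k t 𝒜 W)

def Nice3 (E : V → V → Prop) [DecidableRel E] (G : GadgetSystem V I) (k t : ℕ) (m : ℝ)
    (𝒜 : Finset I) (W : Finset V) (u : V) : Prop :=
  u ∈ (VgoodM E G k t \ VgoodP E G k t) ∩ W ∧ (MissIn E G 𝒜 u).card ≤ k ∧
    ManyIn (outN E u) m (fun v => Nice1 E G k t 𝒜 W v ∨ Nice2 E G k t m 𝒜 W v)

def Nice4 (E : V → V → Prop) [DecidableRel E] (G : GadgetSystem V I) (k t : ℕ) (m : ℝ)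
    (𝒜 : Finset I) (W : Finset V) (u : V) : Prop :=
  u ∈ Vbad E G k t ∩ W ∧
    ManyIn (inN E u) m (Nice1 E G k t 𝒜 W) ∧
    ManyIn (outN E u) m (fun v => Nice1 E G k t 𝒜 W v ∨ Nice2 E G k t m 𝒜 W v)

def NiceFor (E : V → V → Prop) [DecidableRel E] (G : GadgetSystem V I) (k t : ℕ) (m : ℝ)
    (𝒜 : Finset I) (W : Finset V) (u : V) : Prop :=
  Nice1 E G k t 𝒜 W u ∨ Nice2 E G k t m 𝒜 W u ∨ Nice3 E G k t m 𝒜 W u ∨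
    Nice4 E G k t m 𝒜 W u

/-- `u` is eligible for `𝒜` in `W`. -/
def Eligible (E : V → V → Prop) [DecidableRel E] (G : GadgetSystem V I) (k t τ₃ : ℕ)
    (𝒜 : Finset I) (W : Finset V) (u : V) : Prop :=
  NiceFor E G k t ((τ₃ * k * t : ℕ) : ℝ) 𝒜 W u

/-- `u` is helpful for `𝒜` in `W`. -/
def Helpful (E : V → V → Prop) [DecidableRel E] (G : GadgetSystem V I) (k t : ℕ)
    (𝒜 : Finset I) (W : Finset V) (u : V) : Prop :=
  NiceFor E G k t (k : ℝ) 𝒜 W u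

end Defs

noncomputable def phi0 (τ₁ : ℕ) : ℝ := (τ₁ : ℝ) / 4
noncomputable def phi1 (τ₁ : ℕ) : ℝ := phi0 τ₁ / (2 ^ 6 * (rho : ℝ))
noncomputable def phi2 (τ₁ : ℕ) : ℝ := phi1 τ₁ / (2 ^ 14 * (rho : ℝ) ^ 2)
noncomputable def phi3 (τ₁ : ℕ) : ℝ := phi2 τ₁ / (2 ^ 14 * (rho : ℝ) ^ 2)

section AuxLemmas

lemma my_markov {Ω : Type*} (s : Finset Ω) (f : Ω → ℝ) (h0 : ∀ x ∈ s, 0 ≤ f x)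
    (a : ℝ) (P : Ω → Prop) [DecidablePred P]
    (hP : ∀ x ∈ s, P x → a ≤ f x) :
    a * ((s.filter P).card : ℝ) ≤ ∑ x ∈ s, f x := by
  calc a * ((s.filter P).card : ℝ) = ∑ _x ∈ s.filter P, a := by
        rw [Finset.sum_const, nsmul_eq_mul]; ring
    _ ≤ ∑ x ∈ s.filter P, f x :=
        Finset.sum_le_sum fun x hx => hP x (Finset.mem_of_mem_filter x hx)
          (Finset.mem_filter.mp hx).2
    _ ≤ ∑ x ∈ s, f x :=
        Finset.sum_le_sum_of_subset_of_nonneg (Finset.filter_subset _ _)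
          (fun x hx _ => h0 x hx)

lemma my_slice {T N : ℕ} (α : Fin T) (p : (Fin T → Fin N) → Prop) [DecidablePred p]
    (hp : ∀ c j, p (Function.update c α j) ↔ p c) (j₀ : Fin N) :
    N * ((univ.filter fun c => c α = j₀ ∧ p c).card) = (univ.filter p).card := by
  have hpart : (univ.filter p).card
      = ∑ j : Fin N, ((univ.filter p).filter fun c => c α = j).card :=
    Finset.card_eq_sum_card_fiberwise (fun c _ => Finset.mem_univ (c α))
  have hfib : ∀ j : Fin N, ((univ.filter p).filter fun c => c α = j).card
      = ((univ.filter p).filter fun c => c α = j₀).card := by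
    intro j
    refine Finset.card_bij' (fun c _ => Function.update c α j₀)
      (fun c _ => Function.update c α j) ?_ ?_ ?_ ?_
    · intro c hc
      simp only [Finset.mem_filter, Finset.mem_univ, true_and] at hc ⊢
      exact ⟨(hp c j₀).mpr hc.1, Function.update_self _ _ _⟩
    · intro c hc
      simp only [Finset.mem_filter, Finset.mem_univ, true_and] at hc ⊢
      exact ⟨(hp c j).mpr hc.1, Function.update_self _ _ _⟩
    · intro c hc
      simp only [Finset.mem_filter, Finset.mem_univ, true_and] at hc
      show Function.update (Function.update c α j₀) α j = c
      rw [Function.update_idem, ← hc.2, Function.update_eq_self]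
    · intro c hc
      simp only [Finset.mem_filter, Finset.mem_univ, true_and] at hc
      show Function.update (Function.update c α j) α j₀ = c
      rw [Function.update_idem, ← hc.2, Function.update_eq_self]
  have heq : (univ.filter fun c => c α = j₀ ∧ p c)
      = (univ.filter p).filter fun c => c α = j₀ := by
    rw [Finset.filter_filter]
    apply Finset.filter_congr
    intro c _
    tauto
  rw [heq, hpart]
  simp only [hfib]
  rw [Finset.sum_const, Finset.card_univ, Fintype.card_fin, smul_eq_mul]

lemma my_slice_count {T N : ℕ} (β : Fin T) (j₀ : Fin N) :
    N * (univ.filter fun c : Fin T → Fin N => c β = j₀).card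
      = (univ : Finset (Fin T → Fin N)).card := by
  classical
  have h := my_slice β (fun _ => True) (fun _ _ => Iff.rfl) j₀
  simpa using h

lemma sum_inter_card_le {V I : Type*} [DecidableEq V] (U : I → Finset V)
    (hU : ∀ a b : I, a ≠ b → Disjoint (U a) (U b)) (C : Finset I) (A : Finset V) :
    ∑ β ∈ C, (A ∩ U β).card ≤ A.card := by
  classical
  rw [← Finset.card_biUnion
    (fun a _ b _ hab => (hU a b hab).mono inter_subset_right inter_subset_right)]
  exact Finset.card_le_card (Finset.biUnion_subset.mpr fun β _ => inter_subset_left)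

lemma card_le_inter_Wof {V I : Type*} [Fintype V] [DecidableEq V] [Fintype I] [DecidableEq I]
    (G : GadgetSystem V I) (C : Finset I) (A : Finset V) :
    A.card ≤ (A ∩ Wof G C).card + ∑ β ∈ C, (A ∩ G.U β).card := by
  classical
  have h1 : A ∩ Wof G C = A \ C.biUnion G.U := by
    ext x
    simp [Wof, Finset.mem_sdiff, Finset.mem_inter]
  have h2 : (A ∩ C.biUnion G.U) = C.biUnion fun β => A ∩ G.U β := by
    ext x
    simp only [Finset.mem_inter, Finset.mem_biUnion]
    tauto
  have h3 : (A ∩ C.biUnion G.U).card ≤ ∑ β ∈ C, (A ∩ G.U β).card := by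
    rw [h2]; exact Finset.card_biUnion_le
  have h4 := Finset.card_sdiff_add_card_inter A (C.biUnion G.U)
  rw [h1]
  omega

lemma Wof_anti {V I : Type*} [Fintype V] [DecidableEq V] [Fintype I] [DecidableEq I]
    (G : GadgetSystem V I) {C C' : Finset I} (h : C ⊆ C') : Wof G C' ⊆ Wof G C :=
  Finset.sdiff_subset_sdiff (Finset.Subset.refl _)
    (Finset.biUnion_subset_biUnion_of_subset_left _ h)

end AuxLemmas

set_option maxHeartbeats 4000000 in
/-- Lemma 4.10. -/
theorem statement11 :
    ∃ C : ℕ, ∀ (τ₁ k t : ℕ), C ≤ τ₁ → C * τ₁ ≤ k → 2 ≤ t →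
      ∀ (V : Type) [Fintype V] [DecidableEq V] (E : V → V → Prop) [DecidableRel E],
        IsTournament E → StronglyKConnected E (τ₁ * k * t) →
        ∀ G : GadgetSystem V (Fin (sigma1 * k * t)),
          GadgetHyp E G k t → GadgetHyp2 E G k t τ₁ →
          ∀ (D₁ : Finset (Fin (sigma1 * k * t))) (θ₁ θ₂ : ℝ),
            θ₁ ≤ phi2 τ₁ → θ₂ = θ₁ / (2 ^ 8 * (rho : ℝ)) →
            ∀ (M : Fin (sigma1 * k * t) → V → Bool → Finset V)
              (Mass : Fin (sigma1 * k * t) → V → Finset V),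
              (∀ α ∈ D₁, ∀ s ∈ G.S α, ∀ ν : Bool,
                θ₁ * k * t ≤ ((M α s ν).card : ℝ) ∧
                ∀ u ∈ M α s ν,
                  Mass α u ⊆ Vokay G ∧ θ₁ * k * t ≤ ((Mass α u).card : ℝ)) →
              ∃ D₂ : Finset (Fin (sigma1 * k * t)), D₂ ⊆ D₁ ∧
                (D₁.card : ℝ) / (36 * (rho : ℝ) ^ 2) ≤ (D₂.card : ℝ) ∧
                ∀ α ∈ D₂, ∀ s ∈ G.S α, ∀ ν : Bool,
                  ManyIn (M α s ν) (θ₂ * k * t)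
                    (fun u => ManyIn (Mass α u) (θ₂ * k * t)
                      (fun v => θ₂ * k * t ≤
                        ((NgoodM E G k t v ∩ Wof G (D₂.erase α)).card : ℝ))) := by
  classical
  refine ⟨1, ?_⟩
  intro τ₁ k t hτC hkC ht V _ _ E _ _hT _hSC G hG hG2 D₁ θ₁ θ₂ hθ₁ hθ₂ M Mass hM
  by_cases hb0 : θ₂ * k * t ≤ 0
  · refine ⟨D₁, Finset.Subset.refl _, ?_, ?_⟩
    · apply div_le_self (by positivity)
      norm_num [rho]
    · intro α hα s hs ν
      exact ⟨∅, Finset.empty_subset _, by simpa using hb0, by simp⟩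
  push_neg at hb0
  have hρ : (rho : ℝ) = 10 ^ 4 := by norm_num [rho]
  have hτ1 : 1 ≤ τ₁ := hτC
  have hk1 : 1 ≤ k := le_trans hτ1 (by simpa using hkC)
  have hkR : (1 : ℝ) ≤ (k : ℝ) := by exact_mod_cast hk1
  have htR : (2 : ℝ) ≤ (t : ℝ) := by exact_mod_cast ht
  have hktnn : (0 : ℝ) ≤ (k : ℝ) * t := by positivity
  have hktpos : (0 : ℝ) < (k : ℝ) * t := by nlinarith
  have hθ₂pos : 0 < θ₂ := by
    by_contra hcon
    push_neg at hcon
    have h1 : θ₂ * k ≤ 0 := mul_nonpos_iff.mpr (Or.inr ⟨hcon, Nat.cast_nonneg k⟩)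
    have h2 : θ₂ * k * t ≤ 0 := mul_nonpos_iff.mpr (Or.inr ⟨h1, Nat.cast_nonneg t⟩)
    linarith
  have hθ₁eq : θ₁ = 2560000 * θ₂ := by rw [hθ₂, hρ]; ring
  have hθ₁pos : 0 < θ₁ := by rw [hθ₁eq]; linarith
  have hθ21 : 2 * θ₂ ≤ θ₁ := by rw [hθ₁eq]; linarith
  have hθτ1 : θ₁ ≤ (τ₁ : ℝ) / 4 := by
    refine le_trans hθ₁ ?_
    have h0 : (0 : ℝ) ≤ (τ₁ : ℝ) := Nat.cast_nonneg _
    simp only [phi2, phi1, phi0, rho]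
    push_cast
    linarith
  have hθ1kt : 0 < θ₁ * k * t := by nlinarith [mul_pos hθ₁pos hktpos]
  have hθhalf : ∀ m : ℝ, θ₁ * k * t ≤ m → θ₂ * k * t ≤ m / 2 := by
    intro m hm
    have h' : (2 * θ₂) * ((k : ℝ) * t) ≤ θ₁ * ((k : ℝ) * t) :=
      mul_le_mul_of_nonneg_right hθ21 hktnn
    nlinarith [hm]
  have hG8 : ∀ v ∈ Vokay G, ((τ₁ * k * t : ℕ) : ℝ) / 2 ≤ ((NgoodM E G k t v).card : ℝ) := by
    intro v hv
    exact le_trans (le_max_right _ _) (hG2.2.2.1 v hv)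
  have hτktR : ((τ₁ * k * t : ℕ) : ℝ) = (τ₁ : ℝ) * k * t := by push_cast; ring
  have hτktpos : (0 : ℝ) < ((τ₁ * k * t : ℕ) : ℝ) := by
    rw [hτktR]
    have h1 : (1 : ℝ) ≤ (τ₁ : ℝ) := by exact_mod_cast hτ1
    nlinarith
  have hθτkt : θ₂ * k * t ≤ ((τ₁ * k * t : ℕ) : ℝ) / 4 := by
    rw [hτktR]
    have h2 : θ₂ * ((k : ℝ) * t) ≤ ((τ₁ : ℝ) / 4) * ((k : ℝ) * t) := by
      apply mul_le_mul_of_nonneg_right _ hktnn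
      linarith
    nlinarith [h2]
  have hΩne : Nonempty (Fin (sigma1 * k * t) → Fin 320000) := ⟨fun _ => 0⟩
  set ΩR : ℝ := ((univ : Finset (Fin (sigma1 * k * t) → Fin 320000)).card : ℝ) with hΩR
  have hΩpos : 0 < ΩR := by
    rw [hΩR]
    exact_mod_cast Finset.card_pos.mpr Finset.univ_nonempty
  have hΩnn : 0 ≤ ΩR := le_of_lt hΩpos
  set Dfun : Fin (sigma1 * k * t) → (Fin (sigma1 * k * t) → Fin 320000) → Finset (Fin (sigma1 * k * t)) :=
    fun α c => (D₁.erase α).filter fun β => c β = 0 with hDfun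
  set P : Finset (Fin (sigma1 * k * t)) → V → Prop :=
    fun C v => θ₂ * k * t ≤ ((NgoodM E G k t v ∩ Wof G C).card : ℝ) with hP
  set GoodU : Fin (sigma1 * k * t) → V → Finset (Fin (sigma1 * k * t)) → Prop :=
    fun α u C => θ₂ * k * t ≤ (((Mass α u).filter fun v => P C v).card : ℝ) with hGoodU
  set Q : Fin (sigma1 * k * t) → V → Bool → Finset (Fin (sigma1 * k * t)) → Prop :=
    fun α s ν C => ManyIn (M α s ν) (θ₂ * k * t) fun u =>
      ManyIn (Mass α u) (θ₂ * k * t) fun v => P C v with hQ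
  set Ruin : Fin (sigma1 * k * t) → (Fin (sigma1 * k * t) → Fin 320000) → Prop :=
    fun α c => ∃ s ∈ G.S α, ∃ ν : Bool, ¬ Q α s ν (Dfun α c) with hRuin
  have hcnt : ∀ β : Fin (sigma1 * k * t),
      ((univ.filter fun c : Fin (sigma1 * k * t) → Fin 320000 => c β = 0).card : ℝ)
        = ΩR / 320000 := by
    intro β
    have h := my_slice_count β (0 : Fin 320000)
    have h' : (320000 : ℝ)
        * ((univ.filter fun c : Fin (sigma1 * k * t) → Fin 320000 => c β = 0).card : ℝ) = ΩR := by
      rw [hΩR]; exact_mod_cast h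
    linarith
  -- level 1: bad vertices
  have hBad : ∀ (α : Fin (sigma1 * k * t)) (v : V), v ∈ Vokay G →
      ((univ.filter fun c : Fin (sigma1 * k * t) → Fin 320000 => ¬ P (Dfun α c) v).card : ℝ)
        ≤ 2 * ΩR / 320000 := by
    intro α v hv
    have hbv0 : (0 : ℝ) < ((NgoodM E G k t v).card : ℝ) :=
      lt_of_lt_of_le (by linarith [hτktpos]) (hG8 v hv)
    have hθbv : θ₂ * k * t ≤ ((NgoodM E G k t v).card : ℝ) / 2 := by
      have := hG8 v hv
      linarith [hθτkt]
    have hsum : ∑ c : Fin (sigma1 * k * t) → Fin 320000,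
        (∑ β ∈ Dfun α c, ((NgoodM E G k t v ∩ G.U β).card : ℝ))
        ≤ ((NgoodM E G k t v).card : ℝ) * ΩR / 320000 := by
      have h1 : ∀ c : Fin (sigma1 * k * t) → Fin 320000,
          (∑ β ∈ Dfun α c, ((NgoodM E G k t v ∩ G.U β).card : ℝ))
          = ∑ β ∈ D₁.erase α,
              if c β = 0 then ((NgoodM E G k t v ∩ G.U β).card : ℝ) else 0 := by
        intro c
        simp only [hDfun]
        exact Finset.sum_filter _ _
      rw [Finset.sum_congr rfl fun c _ => h1 c, Finset.sum_comm]
      have h2 : ∀ β ∈ D₁.erase α,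
          (∑ c : Fin (sigma1 * k * t) → Fin 320000,
            if c β = 0 then ((NgoodM E G k t v ∩ G.U β).card : ℝ) else 0)
          = (ΩR / 320000) * ((NgoodM E G k t v ∩ G.U β).card : ℝ) := by
        intro β _
        rw [← Finset.sum_filter, Finset.sum_const, nsmul_eq_mul, hcnt β]
      rw [Finset.sum_congr rfl h2, ← Finset.mul_sum]
      have h3 : ∑ β ∈ D₁.erase α, ((NgoodM E G k t v ∩ G.U β).card : ℝ)
          ≤ ((NgoodM E G k t v).card : ℝ) := by
        exact_mod_cast sum_inter_card_le G.U hG.1 (D₁.erase α) (NgoodM E G k t v)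
      calc (ΩR / 320000) * ∑ β ∈ D₁.erase α, ((NgoodM E G k t v ∩ G.U β).card : ℝ)
          ≤ (ΩR / 320000) * ((NgoodM E G k t v).card : ℝ) :=
            mul_le_mul_of_nonneg_left h3 (by linarith)
        _ = ((NgoodM E G k t v).card : ℝ) * ΩR / 320000 := by ring
    have hkey : ∀ c : Fin (sigma1 * k * t) → Fin 320000, ¬ P (Dfun α c) v →
        ((NgoodM E G k t v).card : ℝ) / 2
          ≤ ∑ β ∈ Dfun α c, ((NgoodM E G k t v ∩ G.U β).card : ℝ) := by
      intro c hc
      simp only [hP, not_le] at hc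
      have hW : ((NgoodM E G k t v).card : ℝ)
          ≤ ((NgoodM E G k t v ∩ Wof G (Dfun α c)).card : ℝ)
            + ∑ β ∈ Dfun α c, ((NgoodM E G k t v ∩ G.U β).card : ℝ) := by
        exact_mod_cast card_le_inter_Wof G (Dfun α c) (NgoodM E G k t v)
      linarith
    have hmar := my_markov univ
      (fun c => ∑ β ∈ Dfun α c, ((NgoodM E G k t v ∩ G.U β).card : ℝ))
      (fun c _ => Finset.sum_nonneg fun β _ => Nat.cast_nonneg _)
      (((NgoodM E G k t v).card : ℝ) / 2)
      (fun c => ¬ P (Dfun α c) v)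
      (fun c _ hc => hkey c hc)
    have hfin := le_trans hmar hsum
    refine le_of_mul_le_mul_left ?_
      (show (0 : ℝ) < ((NgoodM E G k t v).card : ℝ) / 2 by linarith)
    calc ((NgoodM E G k t v).card : ℝ) / 2
          * ((univ.filter fun c : Fin (sigma1 * k * t) → Fin 320000 => ¬ P (Dfun α c) v).card : ℝ)
        ≤ ((NgoodM E G k t v).card : ℝ) * ΩR / 320000 := hfin
      _ = ((NgoodM E G k t v).card : ℝ) / 2 * (2 * ΩR / 320000) := by ring
  -- level 2: sad u's
  have hSad : ∀ α ∈ D₁, ∀ s ∈ G.S α, ∀ ν : Bool, ∀ u ∈ M α s ν,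
      ((univ.filter fun c : Fin (sigma1 * k * t) → Fin 320000 => ¬ GoodU α u (Dfun α c)).card : ℝ)
        ≤ 4 * ΩR / 320000 := by
    intro α hα s hs ν u hu
    obtain ⟨hMsub, hMcard⟩ := (hM α hα s hs ν).2 u hu
    have hm0 : (0 : ℝ) < ((Mass α u).card : ℝ) := lt_of_lt_of_le hθ1kt hMcard
    have hθm : θ₂ * k * t ≤ ((Mass α u).card : ℝ) / 2 := hθhalf _ hMcard
    have hsum : ∑ c : Fin (sigma1 * k * t) → Fin 320000,
        ((((Mass α u).filter fun w => ¬ P (Dfun α c) w).card : ℕ) : ℝ)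
        ≤ ((Mass α u).card : ℝ) * (2 * ΩR / 320000) := by
      have h1 : ∀ c : Fin (sigma1 * k * t) → Fin 320000,
          ((((Mass α u).filter fun w => ¬ P (Dfun α c) w).card : ℕ) : ℝ)
          = ∑ w ∈ Mass α u, if ¬ P (Dfun α c) w then (1 : ℝ) else 0 := by
        intro c
        rw [Finset.sum_boole]
      rw [Finset.sum_congr rfl fun c _ => h1 c, Finset.sum_comm]
      have h2 : ∀ w ∈ Mass α u,
          (∑ c : Fin (sigma1 * k * t) → Fin 320000,
            if ¬ P (Dfun α c) w then (1 : ℝ) else 0) ≤ 2 * ΩR / 320000 := by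
        intro w hw
        rw [Finset.sum_boole]
        exact hBad α w (hMsub hw)
      calc ∑ w ∈ Mass α u, (∑ c : Fin (sigma1 * k * t) → Fin 320000,
            if ¬ P (Dfun α c) w then (1 : ℝ) else 0)
          ≤ ∑ _w ∈ Mass α u, (2 * ΩR / 320000) := Finset.sum_le_sum h2
        _ = ((Mass α u).card : ℝ) * (2 * ΩR / 320000) := by
            rw [Finset.sum_const, nsmul_eq_mul]
    have hkey : ∀ c : Fin (sigma1 * k * t) → Fin 320000, ¬ GoodU α u (Dfun α c) →
        ((Mass α u).card : ℝ) / 2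
          ≤ ((((Mass α u).filter fun w => ¬ P (Dfun α c) w).card : ℕ) : ℝ) := by
      intro c hc
      simp only [hGoodU, not_le] at hc
      have hsplit : (((Mass α u).filter fun w => P (Dfun α c) w).card : ℝ)
          + (((Mass α u).filter fun w => ¬ P (Dfun α c) w).card : ℝ)
          = ((Mass α u).card : ℝ) := by
        exact_mod_cast Finset.card_filter_add_card_filter_not
          (s := Mass α u) (p := fun w => P (Dfun α c) w)
      linarith
    have hmar := my_markov univ
      (fun c => ((((Mass α u).filter fun w => ¬ P (Dfun α c) w).card : ℕ) : ℝ))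
      (fun c _ => Nat.cast_nonneg _)
      (((Mass α u).card : ℝ) / 2)
      (fun c => ¬ GoodU α u (Dfun α c))
      (fun c _ hc => hkey c hc)
    have hfin := le_trans hmar hsum
    refine le_of_mul_le_mul_left ?_
      (show (0 : ℝ) < ((Mass α u).card : ℝ) / 2 by linarith)
    calc ((Mass α u).card : ℝ) / 2
          * ((univ.filter fun c : Fin (sigma1 * k * t) → Fin 320000 => ¬ GoodU α u (Dfun α c)).card : ℝ)
        ≤ ((Mass α u).card : ℝ) * (2 * ΩR / 320000) := hfin
      _ = ((Mass α u).card : ℝ) / 2 * (4 * ΩR / 320000) := by ring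
  -- level 3: bad (s, ν) pairs
  have hQbound : ∀ α ∈ D₁, ∀ s ∈ G.S α, ∀ ν : Bool,
      ((univ.filter fun c : Fin (sigma1 * k * t) → Fin 320000 => ¬ Q α s ν (Dfun α c)).card : ℝ)
        ≤ 8 * ΩR / 320000 := by
    intro α hα s hs ν
    have hMcard := (hM α hα s hs ν).1
    have hm0 : (0 : ℝ) < ((M α s ν).card : ℝ) := lt_of_lt_of_le hθ1kt hMcard
    have hθm : θ₂ * k * t ≤ ((M α s ν).card : ℝ) / 2 := hθhalf _ hMcard
    have hsum : ∑ c : Fin (sigma1 * k * t) → Fin 320000,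
        ((((M α s ν).filter fun u => ¬ GoodU α u (Dfun α c)).card : ℕ) : ℝ)
        ≤ ((M α s ν).card : ℝ) * (4 * ΩR / 320000) := by
      have h1 : ∀ c : Fin (sigma1 * k * t) → Fin 320000,
          ((((M α s ν).filter fun u => ¬ GoodU α u (Dfun α c)).card : ℕ) : ℝ)
          = ∑ u ∈ M α s ν, if ¬ GoodU α u (Dfun α c) then (1 : ℝ) else 0 := by
        intro c
        rw [Finset.sum_boole]
      rw [Finset.sum_congr rfl fun c _ => h1 c, Finset.sum_comm]
      have h2 : ∀ u ∈ M α s ν,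
          (∑ c : Fin (sigma1 * k * t) → Fin 320000,
            if ¬ GoodU α u (Dfun α c) then (1 : ℝ) else 0) ≤ 4 * ΩR / 320000 := by
        intro u hu
        rw [Finset.sum_boole]
        exact hSad α hα s hs ν u hu
      calc ∑ u ∈ M α s ν, (∑ c : Fin (sigma1 * k * t) → Fin 320000,
            if ¬ GoodU α u (Dfun α c) then (1 : ℝ) else 0)
          ≤ ∑ _u ∈ M α s ν, (4 * ΩR / 320000) := Finset.sum_le_sum h2
        _ = ((M α s ν).card : ℝ) * (4 * ΩR / 320000) := by
            rw [Finset.sum_const, nsmul_eq_mul]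
    have hkey : ∀ c : Fin (sigma1 * k * t) → Fin 320000, ¬ Q α s ν (Dfun α c) →
        ((M α s ν).card : ℝ) / 2
          ≤ ((((M α s ν).filter fun u => ¬ GoodU α u (Dfun α c)).card : ℕ) : ℝ) := by
      intro c hc
      by_contra hlt
      push_neg at hlt
      refine hc ?_
      have hsplit : (((M α s ν).filter fun u => GoodU α u (Dfun α c)).card : ℝ)
          + (((M α s ν).filter fun u => ¬ GoodU α u (Dfun α c)).card : ℝ)
          = ((M α s ν).card : ℝ) := by
        exact_mod_cast Finset.card_filter_add_card_filter_not
          (s := M α s ν) (p := fun u => GoodU α u (Dfun α c))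
      simp only [hQ]
      refine ⟨(M α s ν).filter fun u => GoodU α u (Dfun α c),
        Finset.filter_subset _ _, by linarith, ?_⟩
      intro u hu
      have hg := (Finset.mem_filter.mp hu).2
      simp only [hGoodU] at hg
      exact ⟨(Mass α u).filter fun w => P (Dfun α c) w, Finset.filter_subset _ _, hg,
        fun w hw => (Finset.mem_filter.mp hw).2⟩
    have hmar := my_markov univ
      (fun c => ((((M α s ν).filter fun u => ¬ GoodU α u (Dfun α c)).card : ℕ) : ℝ))
      (fun c _ => Nat.cast_nonneg _)
      (((M α s ν).card : ℝ) / 2)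
      (fun c => ¬ Q α s ν (Dfun α c))
      (fun c _ hc => hkey c hc)
    have hfin := le_trans hmar hsum
    refine le_of_mul_le_mul_left ?_
      (show (0 : ℝ) < ((M α s ν).card : ℝ) / 2 by linarith)
    calc ((M α s ν).card : ℝ) / 2
          * ((univ.filter fun c : Fin (sigma1 * k * t) → Fin 320000 => ¬ Q α s ν (Dfun α c)).card : ℝ)
        ≤ ((M α s ν).card : ℝ) * (4 * ΩR / 320000) := hfin
      _ = ((M α s ν).card : ℝ) / 2 * (8 * ΩR / 320000) := by ring
  -- level 4: ruined α's
  have hRuinBound : ∀ α ∈ D₁,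
      ((univ.filter fun c : Fin (sigma1 * k * t) → Fin 320000 => Ruin α c).card : ℝ)
        ≤ ΩR / 2 := by
    intro α hα
    have hsub : (univ.filter fun c : Fin (sigma1 * k * t) → Fin 320000 => Ruin α c)
        ⊆ (G.S α).biUnion fun s =>
          (univ.filter fun c : Fin (sigma1 * k * t) → Fin 320000 => ¬ Q α s true (Dfun α c))
          ∪ (univ.filter fun c : Fin (sigma1 * k * t) → Fin 320000 => ¬ Q α s false (Dfun α c)) := by
      intro c hc
      simp only [hRuin, Finset.mem_filter, Finset.mem_univ, true_and] at hc
      obtain ⟨s, hs, ν, hν⟩ := hc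
      refine Finset.mem_biUnion.mpr ⟨s, hs, ?_⟩
      cases ν
      · exact Finset.mem_union_right _ (Finset.mem_filter.mpr ⟨Finset.mem_univ _, hν⟩)
      · exact Finset.mem_union_left _ (Finset.mem_filter.mpr ⟨Finset.mem_univ _, hν⟩)
    have h1 : ((univ.filter fun c : Fin (sigma1 * k * t) → Fin 320000 => Ruin α c).card : ℝ)
        ≤ ∑ s ∈ G.S α,
          ((((univ.filter fun c : Fin (sigma1 * k * t) → Fin 320000 => ¬ Q α s true (Dfun α c))
            ∪ (univ.filter fun c : Fin (sigma1 * k * t) → Fin 320000 => ¬ Q α s false (Dfun α c))).card : ℕ) : ℝ) := by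
      have h := le_trans (Finset.card_le_card hsub) Finset.card_biUnion_le
      exact_mod_cast h
    have h2 : ∀ s ∈ G.S α,
        ((((univ.filter fun c : Fin (sigma1 * k * t) → Fin 320000 => ¬ Q α s true (Dfun α c))
          ∪ (univ.filter fun c : Fin (sigma1 * k * t) → Fin 320000 => ¬ Q α s false (Dfun α c))).card : ℕ) : ℝ)
          ≤ 16 * ΩR / 320000 := by
      intro s hs
      have hcu := Finset.card_union_le
        (univ.filter fun c : Fin (sigma1 * k * t) → Fin 320000 => ¬ Q α s true (Dfun α c))
        (univ.filter fun c : Fin (sigma1 * k * t) → Fin 320000 => ¬ Q α s false (Dfun α c))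
      have hcu' : ((((univ.filter fun c : Fin (sigma1 * k * t) → Fin 320000 => ¬ Q α s true (Dfun α c))
          ∪ (univ.filter fun c : Fin (sigma1 * k * t) → Fin 320000 => ¬ Q α s false (Dfun α c))).card : ℕ) : ℝ)
          ≤ ((univ.filter fun c : Fin (sigma1 * k * t) → Fin 320000 => ¬ Q α s true (Dfun α c)).card : ℝ)
            + ((univ.filter fun c : Fin (sigma1 * k * t) → Fin 320000 => ¬ Q α s false (Dfun α c)).card : ℝ) := by
        exact_mod_cast hcu
      have hA := hQbound α hα s hs true
      have hB := hQbound α hα s hs false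
      linarith
    have h3 := le_trans h1 (Finset.sum_le_sum h2)
    have hScard : ((G.S α).card : ℝ) ≤ 10 ^ 4 := by
      have hS := (hG.2.1 α).1
      have hS' : (G.S α).card ≤ 10 ^ 4 := by simpa [rho] using hS
      exact_mod_cast hS'
    rw [Finset.sum_const, nsmul_eq_mul] at h3
    calc ((univ.filter fun c : Fin (sigma1 * k * t) → Fin 320000 => Ruin α c).card : ℝ)
        ≤ ((G.S α).card : ℝ) * (16 * ΩR / 320000) := h3
      _ ≤ 10 ^ 4 * (16 * ΩR / 320000) := by
          apply mul_le_mul_of_nonneg_right hScard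
          linarith
      _ = ΩR / 2 := by ring
  -- invariance of ruin under recolouring the coordinate α
  have hinv : ∀ (α : Fin (sigma1 * k * t)) (c : Fin (sigma1 * k * t) → Fin 320000)
      (j : Fin 320000), Ruin α (Function.update c α j) ↔ Ruin α c := by
    intro α c j
    have hD : Dfun α (Function.update c α j) = Dfun α c := by
      simp only [hDfun]
      apply Finset.filter_congr
      intro β hβ
      rw [Function.update_of_ne (Finset.ne_of_mem_erase hβ)]
    simp only [hRuin, hD]
  -- main counting
  have hmain : ∀ α ∈ D₁, ΩR / 640000
      ≤ ((univ.filter fun c : Fin (sigma1 * k * t) → Fin 320000 => c α = 0 ∧ ¬ Ruin α c).card : ℝ) := by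
    intro α hα
    have hz : (320000 : ℝ)
        * ((univ.filter fun c : Fin (sigma1 * k * t) → Fin 320000 => c α = 0).card : ℝ) = ΩR := by
      rw [hΩR]; exact_mod_cast my_slice_count α (0 : Fin 320000)
    have hy : (320000 : ℝ)
        * ((univ.filter fun c : Fin (sigma1 * k * t) → Fin 320000 => c α = 0 ∧ Ruin α c).card : ℝ)
        = ((univ.filter fun c : Fin (sigma1 * k * t) → Fin 320000 => Ruin α c).card : ℝ) := by
      exact_mod_cast my_slice α (Ruin α) (fun c j => hinv α c j) 0
    have hsplit : ((univ.filter fun c : Fin (sigma1 * k * t) → Fin 320000 => c α = 0 ∧ Ruin α c).card : ℝ)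
        + ((univ.filter fun c : Fin (sigma1 * k * t) → Fin 320000 => c α = 0 ∧ ¬ Ruin α c).card : ℝ)
        = ((univ.filter fun c : Fin (sigma1 * k * t) → Fin 320000 => c α = 0).card : ℝ) := by
      have h := Finset.card_filter_add_card_filter_not
        (s := univ.filter fun c : Fin (sigma1 * k * t) → Fin 320000 => c α = 0)
        (p := fun c => Ruin α c)
      rw [Finset.filter_filter, Finset.filter_filter] at h
      exact_mod_cast h
    have hr := hRuinBound α hα
    linarith
  set D2f : (Fin (sigma1 * k * t) → Fin 320000) → Finset (Fin (sigma1 * k * t)) :=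
    fun c => D₁.filter fun α => c α = 0 ∧ ¬ Ruin α c with hD2f
  have hsumD : (D₁.card : ℝ) * (ΩR / 640000)
      ≤ ∑ c : Fin (sigma1 * k * t) → Fin 320000, ((D2f c).card : ℝ) := by
    have h1 : ∀ c : Fin (sigma1 * k * t) → Fin 320000,
        ((D2f c).card : ℝ) = ∑ α ∈ D₁, if c α = 0 ∧ ¬ Ruin α c then (1 : ℝ) else 0 := by
      intro c
      simp only [hD2f]
      rw [Finset.sum_boole]
    rw [Finset.sum_congr rfl fun c _ => h1 c, Finset.sum_comm]
    have h2 : ∀ α ∈ D₁, ΩR / 640000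
        ≤ ∑ c : Fin (sigma1 * k * t) → Fin 320000,
            if c α = 0 ∧ ¬ Ruin α c then (1 : ℝ) else 0 := by
      intro α hα
      rw [Finset.sum_boole]
      exact hmain α hα
    calc (D₁.card : ℝ) * (ΩR / 640000) = ∑ _α ∈ D₁, ΩR / 640000 := by
          rw [Finset.sum_const, nsmul_eq_mul]
      _ ≤ _ := Finset.sum_le_sum h2
  have hpigeon : ∃ c : Fin (sigma1 * k * t) → Fin 320000,
      (D₁.card : ℝ) / (36 * (rho : ℝ) ^ 2) ≤ ((D2f c).card : ℝ) := by
    by_contra hno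
    push_neg at hno
    have hlt : ∑ c : Fin (sigma1 * k * t) → Fin 320000, ((D2f c).card : ℝ)
        < ∑ _c : Fin (sigma1 * k * t) → Fin 320000, (D₁.card : ℝ) / (36 * (rho : ℝ) ^ 2) :=
      Finset.sum_lt_sum_of_nonempty Finset.univ_nonempty fun c _ => hno c
    rw [Finset.sum_const, nsmul_eq_mul, ← hΩR, hρ] at hlt
    have hXnn : (0 : ℝ) ≤ (D₁.card : ℝ) * ΩR := mul_nonneg (Nat.cast_nonneg _) hΩnn
    nlinarith [hsumD, hlt, hXnn]
  obtain ⟨c, hc⟩ := hpigeon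
  refine ⟨D2f c, ?_, hc, ?_⟩
  · simp only [hD2f]
    exact Finset.filter_subset _ _
  · intro α hα s hs ν
    have hα' : α ∈ D₁ ∧ (c α = 0 ∧ ¬ Ruin α c) := by
      simpa only [hD2f, Finset.mem_filter] using hα
    have hQ' : Q α s ν (Dfun α c) := by
      by_contra hq
      exact hα'.2.2 (by simp only [hRuin]; exact ⟨s, hs, ν, hq⟩)
    have hsub : (D2f c).erase α ⊆ Dfun α c := by
      intro β hβ
      obtain ⟨hne, hβ2⟩ := Finset.mem_erase.mp hβ
      have hβ3 : β ∈ D₁ ∧ (c β = 0 ∧ ¬ Ruin β c) := by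
        simpa only [hD2f, Finset.mem_filter] using hβ2
      simp only [hDfun, Finset.mem_filter]
      exact ⟨Finset.mem_erase.mpr ⟨hne, hβ3.1⟩, hβ3.2.1⟩
    simp only [hQ] at hQ'
    obtain ⟨s', h1, h2, h3⟩ := hQ'
    refine ⟨s', h1, h2, fun u hu => ?_⟩
    obtain ⟨s'', g1, g2, g3⟩ := h3 u hu
    refine ⟨s'', g1, g2, fun w hw => ?_⟩
    have hPw := g3 w hw
    simp only [hP] at hPw
    refine le_trans hPw ?_
    have hWsub := Wof_anti G hsub
    exact Nat.cast_le.mpr (Finset.card_le_card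
      (Finset.inter_subset_inter (Finset.Subset.refl _) hWsub))

end TournamentPartition
end

section
/- Let T, the constants, and a gadget system be as in the context, and let C₀ ⊆ A₁ be any subset. Then there is a subset C₁' ⊆ C₀ of size at least |C₀|/(9ρ²) such that for every α ∈ C₁', every s ∈ S(α) and every ν ∈ {+,−}: if there exists β ∈ C₁' ∖ {α} with |N^ν_okay(s) ∩ U(β)| ≥ φ₁kt, then there exists γ ∈ C₀ ∖ C₁' with |N^ν_okay(s) ∩ U(γ)| ≥ φ₁kt. -/
open Finset

namespace TournamentPartition

/-- Pick one designated element of `D.erase α` (if any), as a finset. -/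
private def pick {ι : Type*} [DecidableEq ι] [LinearOrder ι] (D : Finset ι) (α : ι) :
    Finset ι :=
  if h : (D.erase α).Nonempty then {(D.erase α).min' h} else ∅

private lemma pick_card_le {ι : Type*} [DecidableEq ι] [LinearOrder ι] (D : Finset ι)
    (α : ι) : (pick D α).card ≤ 1 := by
  unfold pick; split <;> simp

private lemma pick_subset {ι : Type*} [DecidableEq ι] [LinearOrder ι] (D : Finset ι)
    (α : ι) : pick D α ⊆ D.erase α := by
  unfold pick; split
  · next h => exact Finset.singleton_subset_iff.2 (Finset.min'_mem _ h)
  · exact Finset.empty_subset _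

private lemma pick_nonempty {ι : Type*} [DecidableEq ι] [LinearOrder ι] {D : Finset ι}
    {α : ι} (h : (D.erase α).Nonempty) : (pick D α).Nonempty := by
  unfold pick; rw [dif_pos h]; simp

/-- Greedy one-sided independent set lemma: if out-neighbourhoods `F α` have size at most
`D₁` and in-degrees within `s` are at most `D₂`, then `s` contains an "independent" subset
of proportion `1/(D₁+D₂+1)`. -/
private lemma greedy_indep {ι : Type*} [DecidableEq ι] (F : ι → Finset ι) (D₁ D₂ : ℕ)
    (hF : ∀ α, (F α).card ≤ D₁) :
    ∀ n (s : Finset ι), s.card ≤ n →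
      (∀ α ∈ s, (s.filter fun β => α ∈ F β).card ≤ D₂) →
      ∃ t, t ⊆ s ∧ s.card ≤ (D₁ + D₂ + 1) * t.card ∧
        ∀ α ∈ t, ∀ β ∈ t, β ≠ α → β ∉ F α := by
  intro n
  induction n with
  | zero =>
    intro s hs _
    exact ⟨∅, Finset.empty_subset _, by simpa using hs, by simp⟩
  | succ n ih =>
    intro s hs hdeg
    rcases s.eq_empty_or_nonempty with rfl | ⟨a, ha⟩
    · exact ⟨∅, Finset.empty_subset _, by simp, by simp⟩
    set R : Finset ι := insert a (F a ∪ s.filter fun β => a ∈ F β) with hR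
    set s₂ : Finset ι := s \ R with hs₂def
    have hsub : s₂ ⊆ s := Finset.sdiff_subset
    have ha2 : a ∉ s₂ := fun h => (Finset.mem_sdiff.1 h).2 (Finset.mem_insert_self _ _)
    have hcard2 : s₂.card ≤ n := by
      have hss : s₂ ⊂ s := ⟨hsub, fun h => ha2 (h ha)⟩
      have := Finset.card_lt_card hss
      omega
    obtain ⟨t₂, ht₂sub, ht₂card, ht₂ind⟩ := ih s₂ hcard2 (fun α hα => by
      refine le_trans (Finset.card_le_card ?_) (hdeg α (hsub hα))
      intro β hβ
      simp only [Finset.mem_filter] at hβ ⊢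
      exact ⟨hsub hβ.1, hβ.2⟩)
    have hat2 : a ∉ t₂ := fun h => ha2 (ht₂sub h)
    refine ⟨insert a t₂, ?_, ?_, ?_⟩
    · intro x hx
      rcases Finset.mem_insert.1 hx with rfl | hx
      · exact ha
      · exact hsub (ht₂sub hx)
    · have hRcard : R.card ≤ D₁ + D₂ + 1 := by
        calc R.card ≤ (F a ∪ s.filter fun β => a ∈ F β).card + 1 :=
              Finset.card_insert_le _ _
          _ ≤ (F a).card + (s.filter fun β => a ∈ F β).card + 1 :=
              Nat.add_le_add_right (Finset.card_union_le _ _) 1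
          _ ≤ D₁ + D₂ + 1 := by
              have h1 := hF a; have h2 := hdeg a ha; omega
      have hscard : s.card ≤ s₂.card + R.card := by
        have hsu : s ⊆ s₂ ∪ R := by
          intro x hx
          by_cases hxR : x ∈ R
          · exact Finset.mem_union_right _ hxR
          · exact Finset.mem_union_left _ (Finset.mem_sdiff.2 ⟨hx, hxR⟩)
        calc s.card ≤ (s₂ ∪ R).card := Finset.card_le_card hsu
          _ ≤ s₂.card + R.card := Finset.card_union_le _ _
      rw [Finset.card_insert_of_notMem hat2]
      calc s.card ≤ s₂.card + R.card := hscard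
        _ ≤ (D₁ + D₂ + 1) * t₂.card + (D₁ + D₂ + 1) :=
            Nat.add_le_add ht₂card hRcard
        _ = (D₁ + D₂ + 1) * (t₂.card + 1) := by ring
    · intro α hα β hβ hne
      rcases Finset.mem_insert.1 hα with h1 | h1
      · rcases Finset.mem_insert.1 hβ with h2 | h2
        · exact absurd (h2.trans h1.symm) hne
        · intro hβF
          have hβ2 : β ∈ s₂ := ht₂sub h2
          subst h1
          exact (Finset.mem_sdiff.1 hβ2).2
            (Finset.mem_insert.2 (Or.inr (Finset.mem_union_left _ hβF)))
      · rcases Finset.mem_insert.1 hβ with h2 | h2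
        · intro hβF
          have hα2 : α ∈ s₂ := ht₂sub h1
          subst h2
          exact (Finset.mem_sdiff.1 hα2).2
            (Finset.mem_insert.2 (Or.inr (Finset.mem_union_right _
              (Finset.mem_filter.2 ⟨hsub hα2, hβF⟩))))
        · exact ht₂ind α h1 β h2 hne

/-- Claim 4.11. -/
theorem statement12 :
    ∃ C : ℕ, ∀ (τ₁ k t : ℕ), C ≤ τ₁ → C * τ₁ ≤ k → 2 ≤ t →
      ∀ (V : Type) [Fintype V] [DecidableEq V] (E : V → V → Prop) [DecidableRel E],
        IsTournament E → StronglyKConnected E (τ₁ * k * t) →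
        ∀ G : GadgetSystem V (Fin (sigma1 * k * t)),
          CondG1 G → (∀ α, (G.S α).card ≤ rho) →
          ∀ C₀ : Finset (Fin (sigma1 * k * t)),
            ∃ C₁' : Finset (Fin (sigma1 * k * t)), C₁' ⊆ C₀ ∧
              (C₀.card : ℝ) / (9 * (rho : ℝ) ^ 2) ≤ (C₁'.card : ℝ) ∧
              ∀ α ∈ C₁', ∀ s ∈ G.S α,
                ((∃ β ∈ C₁'.erase α,
                    phi1 τ₁ * k * t ≤ ((NokayP E G s ∩ G.U β).card : ℝ)) →
                  ∃ γ ∈ C₀ \ C₁',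
                    phi1 τ₁ * k * t ≤ ((NokayP E G s ∩ G.U γ).card : ℝ)) ∧
                ((∃ β ∈ C₁'.erase α,
                    phi1 τ₁ * k * t ≤ ((NokayM E G s ∩ G.U β).card : ℝ)) →
                  ∃ γ ∈ C₀ \ C₁',
                    phi1 τ₁ * k * t ≤ ((NokayM E G s ∩ G.U γ).card : ℝ)) := by
  classical
  refine ⟨1, ?_⟩
  intro τ₁ k t _ _ _ V _ _ E _ _ _ G _ _ C₀
  -- heavy index sets
  set Dp : V → Finset (Fin (sigma1 * k * t)) := fun s =>
    C₀.filter fun β => phi1 τ₁ * k * t ≤ ((NokayP E G s ∩ G.U β).card : ℝ) with hDp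
  set Dm : V → Finset (Fin (sigma1 * k * t)) := fun s =>
    C₀.filter fun β => phi1 τ₁ * k * t ≤ ((NokayM E G s ∩ G.U β).card : ℝ) with hDm
  set F : Fin (sigma1 * k * t) → Finset (Fin (sigma1 * k * t)) := fun α =>
    (G.S α).biUnion fun s => pick (Dp s) α ∪ pick (Dm s) α with hFdef
  have hFcard : ∀ α, (F α).card ≤ 2 * rho := by
    intro α
    calc (F α).card ≤ ∑ s ∈ G.S α, (pick (Dp s) α ∪ pick (Dm s) α).card :=
          Finset.card_biUnion_le
      _ ≤ ∑ s ∈ G.S α, 2 := by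
          refine Finset.sum_le_sum fun s _ => ?_
          have h1 := pick_card_le (Dp s) α
          have h2 := pick_card_le (Dm s) α
          have := Finset.card_union_le (pick (Dp s) α) (pick (Dm s) α)
          omega
      _ = 2 * (G.S α).card := by rw [Finset.sum_const, smul_eq_mul, mul_comm]
      _ ≤ 2 * rho := by have := ‹∀ α, (G.S α).card ≤ rho› α; omega
  -- double counting: in-degrees
  have hswap : (∑ α ∈ C₀, (C₀.filter fun β => α ∈ F β).card)
      = ∑ β ∈ C₀, (C₀.filter fun α => α ∈ F β).card := by
    simp only [Finset.card_filter]
    exact Finset.sum_comm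
  have hsumle : (∑ α ∈ C₀, (C₀.filter fun β => α ∈ F β).card) ≤ 2 * rho * C₀.card := by
    rw [hswap]
    calc (∑ β ∈ C₀, (C₀.filter fun α => α ∈ F β).card)
        ≤ ∑ β ∈ C₀, 2 * rho := by
          refine Finset.sum_le_sum fun β _ => ?_
          refine le_trans (Finset.card_le_card ?_) (hFcard β)
          intro x hx
          exact (Finset.mem_filter.1 hx).2
      _ = 2 * rho * C₀.card := by rw [Finset.sum_const, smul_eq_mul, mul_comm]
  set B : Finset (Fin (sigma1 * k * t)) :=
    C₀.filter fun α => 4 * rho + 1 ≤ (C₀.filter fun β => α ∈ F β).card with hB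
  have hBcard : (4 * rho + 1) * B.card ≤ 2 * rho * C₀.card := by
    calc (4 * rho + 1) * B.card = B.card • (4 * rho + 1) := by
          rw [smul_eq_mul, mul_comm]
      _ ≤ ∑ α ∈ B, (C₀.filter fun β => α ∈ F β).card :=
          Finset.card_nsmul_le_sum _ _ _ (fun α hα => (Finset.mem_filter.1 hα).2)
      _ ≤ ∑ α ∈ C₀, (C₀.filter fun β => α ∈ F β).card :=
          Finset.sum_le_sum_of_subset (Finset.filter_subset _ _)
      _ ≤ 2 * rho * C₀.card := hsumle
  set C₀' : Finset (Fin (sigma1 * k * t)) := C₀ \ B with hC₀'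
  have hsplit : C₀'.card + B.card = C₀.card :=
    Finset.card_sdiff_add_card_eq_card (Finset.filter_subset _ _)
  have hBle : B.card ≤ C₀'.card := by
    simp only [rho] at hBcard
    omega
  have hdeg : ∀ α ∈ C₀', (C₀'.filter fun β => α ∈ F β).card ≤ 4 * rho := by
    intro α hα
    have hαB : α ∉ B := (Finset.mem_sdiff.1 hα).2
    have h1 : ¬ (4 * rho + 1 ≤ (C₀.filter fun β => α ∈ F β).card) := by
      intro h
      exact hαB (Finset.mem_filter.2 ⟨(Finset.mem_sdiff.1 hα).1, h⟩)
    have h2 : (C₀'.filter fun β => α ∈ F β).card ≤ (C₀.filter fun β => α ∈ F β).card := by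
      refine Finset.card_le_card ?_
      intro x hx
      simp only [Finset.mem_filter] at hx ⊢
      exact ⟨(Finset.mem_sdiff.1 hx.1).1, hx.2⟩
    omega
  obtain ⟨t', ht'sub, ht'card, ht'ind⟩ :=
    greedy_indep F (2 * rho) (4 * rho) hFcard C₀'.card C₀' le_rfl hdeg
  have ht'C₀ : t' ⊆ C₀ := ht'sub.trans Finset.sdiff_subset
  refine ⟨t', ht'C₀, ?_, ?_⟩
  · -- cardinality
    have hnat : C₀.card ≤ 9 * rho ^ 2 * t'.card := by
      simp only [rho] at ht'card ⊢
      omega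
    rw [div_le_iff₀ (by norm_num [rho] : (0:ℝ) < 9 * (rho : ℝ) ^ 2)]
    calc (C₀.card : ℝ) ≤ ((9 * rho ^ 2 * t'.card : ℕ) : ℝ) := by exact_mod_cast hnat
      _ = t'.card * (9 * (rho : ℝ) ^ 2) := by push_cast; ring
  · intro α hα s hs
    constructor
    · rintro ⟨β, hβ, hheavy⟩
      have hβt : β ∈ t' := Finset.mem_of_mem_erase hβ
      have hβne : β ≠ α := Finset.ne_of_mem_erase hβ
      have hβD : β ∈ (Dp s).erase α := by
        refine Finset.mem_erase.2 ⟨hβne, ?_⟩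
        simp only [hDp]
        exact Finset.mem_filter.2 ⟨ht'C₀ hβt, hheavy⟩
      obtain ⟨d, hd⟩ := pick_nonempty ⟨β, hβD⟩
      have hdD : d ∈ (Dp s).erase α := pick_subset _ _ hd
      have hdF : d ∈ F α := by
        simp only [hFdef, Finset.mem_biUnion]
        exact ⟨s, hs, Finset.mem_union_left _ hd⟩
      have hdne : d ≠ α := (Finset.mem_erase.1 hdD).1
      have hdnt : d ∉ t' := fun hdt => ht'ind α hα d hdt hdne hdF
      have hdmem : d ∈ Dp s := (Finset.mem_erase.1 hdD).2
      rw [hDp] at hdmem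
      have hdmem' := Finset.mem_filter.1 hdmem
      exact ⟨d, Finset.mem_sdiff.2 ⟨hdmem'.1, hdnt⟩, hdmem'.2⟩
    · rintro ⟨β, hβ, hheavy⟩
      have hβt : β ∈ t' := Finset.mem_of_mem_erase hβ
      have hβne : β ≠ α := Finset.ne_of_mem_erase hβ
      have hβD : β ∈ (Dm s).erase α := by
        refine Finset.mem_erase.2 ⟨hβne, ?_⟩
        simp only [hDm]
        exact Finset.mem_filter.2 ⟨ht'C₀ hβt, hheavy⟩
      obtain ⟨d, hd⟩ := pick_nonempty ⟨β, hβD⟩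
      have hdD : d ∈ (Dm s).erase α := pick_subset _ _ hd
      have hdF : d ∈ F α := by
        simp only [hFdef, Finset.mem_biUnion]
        exact ⟨s, hs, Finset.mem_union_right _ hd⟩
      have hdne : d ≠ α := (Finset.mem_erase.1 hdD).1
      have hdnt : d ∉ t' := fun hdt => ht'ind α hα d hdt hdne hdF
      have hdmem : d ∈ Dm s := (Finset.mem_erase.1 hdD).2
      rw [hDm] at hdmem
      have hdmem' := Finset.mem_filter.1 hdmem
      exact ⟨d, Finset.mem_sdiff.2 ⟨hdmem'.1, hdnt⟩, hdmem'.2⟩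

end TournamentPartition
end
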